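/- arXiv:1201.3269 — 3 statements merged into one kernel-verified Lean document; each statement's English description precedes it below -/
import Mathlib

section
/- The set of Roth type irrational numbers is invariant under the action of GL(2,ℤ) by fractional linear transformations: if θ is of Roth type and g = (a b; c d) ∈ GL(2,ℤ) with cθ + d ≠ 0, then (aθ + b)/(cθ + d) is of Roth type. -/
/-! If `p` is the nearest integer to `q θ'`, where `θ' = (aθ + b)/(cθ + d)`, then the integer
vector `(q', p') = (aq - cp, dp - bq)` is nonzero (the matrix is invertible), has `|q'| = O(q)`,
and satisfies `q'θ - p' = (cθ + d)(qθ' - p)`. So the Roth bound for `θ` at `q'` gives one for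
`θ'` at `q`, with a constant depending only on the matrix and `θ`. -/

/-- θ is of Roth type: for every ε > 0 there is C_ε > 0 with
`‖qθ‖ ≥ C_ε q^{-(1+ε)}` for all positive integers q, where `‖x‖ = |x - round x|`
is the distance to the nearest integer. -/
def IsRothType (θ : ℝ) : Prop :=
  ∀ ε : ℝ, 0 < ε → ∃ C : ℝ, 0 < C ∧ ∀ q : ℕ, 0 < q →
    C * (q : ℝ) ^ (-(1 + ε)) ≤ |(q : ℝ) * θ - round ((q : ℝ) * θ)|

section FloorRing

variable {α : Type*} [Field α] [LinearOrder α] [IsStrictOrderedRing α] [FloorRing α]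

theorem abs_natAbs_mul_sub_round_le (θ : α) (q p : ℤ) :
    |(q.natAbs : α) * θ - round ((q.natAbs : α) * θ)| ≤ |q * θ - p| := by
  obtain ⟨n, rfl | rfl⟩ := Int.eq_nat_or_neg q
  · simpa using round_le ((n : α) * θ) p
  · calc _ ≤ |(n : α) * θ - (-p : ℤ)| := by simpa using round_le ((n : α) * θ) (-p)
      _ = |(-n : ℤ) * θ - p| := by rw [← abs_neg]; push_cast; ring_nf

theorem abs_round_le (x : α) : |(round x : α)| ≤ |x| + 1 / 2 := by
  have := abs_sub_round x
  have := abs_sub_abs_le_abs_sub (round x : α) x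
  rw [abs_sub_comm] at this
  linarith

theorem max_abs_sub_mul_round_le (a c x : α) {q : α} (hq : 1 ≤ q) :
    max |a * q - c * round (q * x)| 1 ≤ (|a| + |c| * (|x| + 1) + 1) * q := by
  have hround : |(round (q * x) : α)| ≤ q * (|x| + 1) := by
    have := abs_round_le (q * x)
    rw [abs_mul, abs_of_pos (show 0 < q by linarith)] at this
    nlinarith
  have hqx : 0 ≤ |c| * (|x| + 1) * q := by positivity
  refine max_le ?_ (by nlinarith [abs_nonneg a])
  calc |a * q - c * round (q * x)| ≤ |a * q| + |c * round (q * x)| := abs_sub _ _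
    _ ≤ |a| * q + |c| * (q * (|x| + 1)) := by
        rw [abs_mul, abs_mul, abs_of_pos (by linarith : 0 < q)]
        gcongr
    _ ≤ _ := by nlinarith [abs_nonneg a]

end FloorRing

/-- The Roth bound extended to all nonzero integer vectors `(q, p)`; the `max` with `1` covers
`q = 0`, where `|qθ - p| = |p| ≥ 1`. -/
theorem IsRothType.exists_le_abs_mul_sub {θ : ℝ} (h : IsRothType θ) {ε : ℝ} (hε : 0 < ε) :
    ∃ C : ℝ, 0 < C ∧ ∀ q p : ℤ, q ≠ 0 ∨ p ≠ 0 →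
      C * max |(q : ℝ)| 1 ^ (-(1 + ε)) ≤ |q * θ - p| := by
  obtain ⟨C, hC, hCθ⟩ := h ε hε
  refine ⟨min C 1, lt_min hC one_pos, fun q p hqp => ?_⟩
  rcases eq_or_ne q 0 with rfl | hq
  · have hp : (1 : ℝ) ≤ |(p : ℝ)| := by exact_mod_cast Int.one_le_abs (hqp.resolve_left (by simp))
    simpa using (min_le_right C 1).trans hp
  · have hmax : max |(q : ℝ)| 1 = (q.natAbs : ℝ) := by
      rw [Nat.cast_natAbs, Int.cast_abs, max_eq_left]
      exact_mod_cast Int.one_le_abs hq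
    rw [hmax]
    calc min C 1 * (q.natAbs : ℝ) ^ (-(1 + ε))
        ≤ C * (q.natAbs : ℝ) ^ (-(1 + ε)) := by gcongr; exact min_le_left C 1
      _ ≤ _ := hCθ _ (Int.natAbs_pos.mpr hq)
      _ ≤ _ := abs_natAbs_mul_sub_round_le θ q p

theorem mul_moebius_sub_eq {K : Type*} [Field K] (a b c d θ q p : K) (hcd : c * θ + d ≠ 0) :
    q * ((a * θ + b) / (c * θ + d)) - p
      = ((a * q - c * p) * θ - (d * p - b * q)) / (c * θ + d) := by
  rw [eq_div_iff hcd, sub_mul, mul_assoc, div_mul_cancel₀ _ hcd]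
  ring

theorem sub_ne_zero_or_sub_ne_zero_of_det_ne_zero {R : Type*} [CommRing R] [IsDomain R]
    {a b c d : R} (hdet : a * d - b * c ≠ 0) {q : R} (hq : q ≠ 0) (p : R) :
    a * q - c * p ≠ 0 ∨ d * p - b * q ≠ 0 := by
  by_contra! h
  have : (a * d - b * c) * q = d * (a * q - c * p) + c * (d * p - b * q) := by ring
  rw [h.1, h.2] at this
  simp_all

theorem rothType_invariant_GL2Z_general (θ : ℝ) (hroth : IsRothType θ)
    (a b c d : ℤ) (hdet : a * d - b * c = 1 ∨ a * d - b * c = -1)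
    (hcd : (c : ℝ) * θ + (d : ℝ) ≠ 0) :
    IsRothType (((a : ℝ) * θ + (b : ℝ)) / ((c : ℝ) * θ + (d : ℝ))) := by
  intro ε hε
  obtain ⟨C, hC, hCθ⟩ := hroth.exists_le_abs_mul_sub hε
  set θ' := ((a : ℝ) * θ + b) / (c * θ + d)
  set K := |(a : ℝ)| + |(c : ℝ)| * (|θ'| + 1) + 1
  have hK : 0 < K := by positivity
  refine ⟨C * K ^ (-(1 + ε)) / |c * θ + d|, by positivity, fun q hq => ?_⟩
  have hq1 : (1 : ℝ) ≤ q := by exact_mod_cast hq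
  set p := round ((q : ℝ) * θ')
  have hdet_ne : a * d - b * c ≠ 0 := by rcases hdet with h | h <;> rw [h] <;> decide
  have hvec := sub_ne_zero_or_sub_ne_zero_of_det_ne_zero hdet_ne (Int.natCast_ne_zero.mpr hq.ne') p
  have hsize : max |((a * q - c * p : ℤ) : ℝ)| 1 ≤ K * q := by
    push_cast; exact max_abs_sub_mul_round_le _ _ _ hq1
  calc C * K ^ (-(1 + ε)) / |c * θ + d| * (q : ℝ) ^ (-(1 + ε))
      = C * (K * q) ^ (-(1 + ε)) / |c * θ + d| := by
        rw [Real.mul_rpow hK.le q.cast_nonneg]; ring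
    _ ≤ C * max |((a * q - c * p : ℤ) : ℝ)| 1 ^ (-(1 + ε)) / |c * θ + d| := by
        gcongr C * ?_ / _
        exact Real.rpow_le_rpow_of_nonpos (by positivity) hsize (by linarith : -(1 + ε) ≤ 0)
    _ ≤ |((a * q - c * p : ℤ) : ℝ) * θ - ((d * p - b * q : ℤ) : ℝ)| / |c * θ + d| := by
        gcongr; exact hCθ _ _ hvec
    _ = |q * θ' - p| := by
        rw [mul_moebius_sub_eq _ _ _ _ _ _ _ hcd, abs_div]; push_cast; ring_nf

/-- The set of Roth type irrational numbers is invariant under the action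
of GL(2,ℤ) by fractional linear transformations: if θ is of Roth type and
g = (a b; c d) ∈ GL(2,ℤ) with cθ + d ≠ 0, then (aθ + b)/(cθ + d) is of Roth type. -/
theorem rothType_invariant_GL2Z (θ : ℝ) (hθ : Irrational θ) (hroth : IsRothType θ)
    (a b c d : ℤ) (hdet : a * d - b * c = 1 ∨ a * d - b * c = -1)
    (hcd : (c : ℝ) * θ + (d : ℝ) ≠ 0) :
    IsRothType (((a : ℝ) * θ + (b : ℝ)) / ((c : ℝ) * θ + (d : ℝ))) :=
  rothType_invariant_GL2Z_general θ hroth a b c d hdet hcd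
end

section
/- Let (m_k) be the Marmi–Moussa–Yoccoz acceleration times of the Rauzy–Veech induction of an interval exchange map T on d ≥ 2 intervals (m_{k+1} is the largest integer > m_k such that not all letters of the alphabet appear as winner in the Rauzy path from m_k to m_{k+1}). Then for r ≥ max(2d − 3, 2), all entries of the cocycle matrix A(k, k+r) = Q(m_k, m_{k+r}) are strictly positive. -/
/-! Rauzy–Veech induction for interval exchange maps: combinatorial data,
length data, the elementary Rauzy step, cocycle matrices, and acceleration times. -/

/-- Combinatorial data of an interval exchange map: two bijections ("top" and
"bottom") from the alphabet onto positions (0-indexed; position `card A - 1`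
is the last one). -/
structure IETComb (A : Type) [Fintype A] where
  pt : A ≃ Fin (Fintype.card A)
  pb : A ≃ Fin (Fintype.card A)

/-- Full data of an interval exchange map: combinatorial data plus length data. -/
structure IETData (A : Type) [Fintype A] extends IETComb A where
  lam : A → ℝ

variable {A : Type} [Fintype A] [DecidableEq A] [Nonempty A]

/-- The last position. -/
def lastIdx (A : Type) [Fintype A] [Nonempty A] : Fin (Fintype.card A) :=
  ⟨Fintype.card A - 1, Nat.sub_lt Fintype.card_pos Nat.one_pos⟩

/-- The letter in the last position of the top row. -/
def topLetter (c : IETComb A) : A := c.pt.symm (lastIdx A)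

/-- The letter in the last position of the bottom row. -/
def botLetter (c : IETComb A) : A := c.pb.symm (lastIdx A)

/-- The combinatorial Rauzy operation of top type `R_t`: the top row is unchanged and
the bottom row is rearranged so that the bottom-last letter is moved to just after the
position of the top-last letter. -/
def TopComb (c c' : IETComb A) : Prop :=
  c'.pt = c.pt ∧
  ∀ β : A, (c'.pb β : ℕ) =
    if (c.pb β : ℕ) ≤ (c.pb (topLetter c) : ℕ) then (c.pb β : ℕ)
    else if β = botLetter c then (c.pb (topLetter c) : ℕ) + 1
    else (c.pb β : ℕ) + 1

/-- The combinatorial Rauzy operation of bottom type `R_b`. -/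
def BotComb (c c' : IETComb A) : Prop :=
  c'.pb = c.pb ∧
  ∀ β : A, (c'.pt β : ℕ) =
    if (c.pt β : ℕ) ≤ (c.pt (botLetter c) : ℕ) then (c.pt β : ℕ)
    else if β = topLetter c then (c.pt (botLetter c) : ℕ) + 1
    else (c.pt β : ℕ) + 1

/-- One step of Rauzy–Veech induction, recording the winner and the loser. -/
def RVStep (D D' : IETData A) (win lose : A) : Prop :=
  (win = topLetter D.toIETComb ∧ lose = botLetter D.toIETComb ∧
    D.lam lose < D.lam win ∧ TopComb D.toIETComb D'.toIETComb ∧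
    D'.lam = Function.update D.lam win (D.lam win - D.lam lose)) ∨
  (win = botLetter D.toIETComb ∧ lose = topLetter D.toIETComb ∧
    D.lam lose < D.lam win ∧ BotComb D.toIETComb D'.toIETComb ∧
    D'.lam = Function.update D.lam win (D.lam win - D.lam lose))

/-- The elementary Rauzy matrix `B_γ = I + E_{loser, winner}` of the i-th arrow. -/
def Bmat (win lose : ℕ → A) (i : ℕ) : Matrix A A ℕ :=
  1 + Matrix.single (lose i) (win i) 1

/-- The cocycle matrix `Q(m,n) = B_{γ_{n-1}} ⋯ B_{γ_m}` along the Rauzy path. -/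
def Qmat (win lose : ℕ → A) (m n : ℕ) : Matrix A A ℕ :=
  (((List.range' m (n - m)).map (Bmat win lose)).reverse).prod

/-- The norm of a matrix: the sum of the absolute values of its entries. -/
noncomputable def matNorm (Q : Matrix A A ℕ) : ℝ := ∑ a, ∑ b, (Q a b : ℝ)

/-- `nk` is the sequence of Zorich acceleration times of the Rauzy path with winners
`win`: `n_0 = 0` and `γ(n_k, n_{k+1})` is the longest path all of whose arrows have the
same winner. -/
def ZorichTimes (win : ℕ → A) (nk : ℕ → ℕ) : Prop :=
  nk 0 = 0 ∧ StrictMono nk ∧ ∀ k : ℕ,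
    (∀ i : ℕ, nk k ≤ i → i < nk (k + 1) → win i = win (nk k)) ∧
    win (nk (k + 1)) ≠ win (nk k)

/-- `mk` is the sequence of Marmi–Moussa–Yoccoz acceleration times: `m_0 = 0` and
`m_{k+1} > m_k` is the largest integer such that not all letters are taken as winner
by the arrows in `γ(m_k, m_{k+1})`. -/
def MMYTimes (win : ℕ → A) (mk : ℕ → ℕ) : Prop :=
  mk 0 = 0 ∧ StrictMono mk ∧ ∀ k : ℕ,
    (Finset.Ico (mk k) (mk (k + 1))).image win ≠ Finset.univ ∧
    (Finset.Icc (mk k) (mk (k + 1))).image win = Finset.univ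

/-!
Row `lose n` of `Q(M, n + 1)` is row `lose n` plus row `win n` of `Q(M, n)`, so the support
of a column `b` only grows, and it grows at step `n` exactly when `win n` lies in it and
`lose n` does not. The winner of a step is the winner or the loser of the next one; hence if
the support misses the winner at time `t` but contains the winner at a later time `u`, it grows
strictly in between. Every letter wins in each MMY segment, so if `Q(m_k, m_{k+r}) a b = 0`
the support of column `b` grows once when `b` first wins, then once in every two further
segments (`a` wins in the first, `b` in the second), and once more in the last two segments
using any supported letter other than `win m_{k+r}`, which wins before `m_{k+r}`. With
`r ≥ 2d - 3` it reaches all `d` letters, including `a`.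
-/

lemma RVStep.win_ne_lose {D D' : IETData A} {w l : A} (h : RVStep D D' w l) : w ≠ l := by
  rintro rfl
  rcases h with ⟨-, -, hlt, -⟩ | ⟨-, -, hlt, -⟩ <;> exact lt_irrefl _ hlt

/-- The winner stays in the last position of its row, so it takes part in the next step. -/
lemma RVStep.win_eq_win_or_lose {D D' D'' : IETData A} {w l w' l' : A}
    (h : RVStep D D' w l) (h' : RVStep D' D'' w' l') : w = w' ∨ w = l' := by
  rcases h with ⟨rfl, -, -, ⟨hpt, -⟩, -⟩ | ⟨rfl, -, -, ⟨hpb, -⟩, -⟩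
  · have htop : topLetter D'.toIETComb = topLetter D.toIETComb := by simp only [topLetter, hpt]
    rcases h' with ⟨rfl, -⟩ | ⟨-, rfl, -⟩
    exacts [Or.inl htop.symm, Or.inr htop.symm]
  · have hbot : botLetter D'.toIETComb = botLetter D.toIETComb := by simp only [botLetter, hpb]
    rcases h' with ⟨-, rfl, -⟩ | ⟨rfl, -⟩
    exacts [Or.inr hbot.symm, Or.inl hbot.symm]

section ColumnSupport

variable {α : Type} [Fintype α] [DecidableEq α] (win lose : ℕ → α)

lemma Qmat_self (m : ℕ) : Qmat win lose m m = 1 := by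
  simp [Qmat]

lemma Qmat_succ {m n : ℕ} (h : m ≤ n) :
    Qmat win lose m (n + 1) = Bmat win lose n * Qmat win lose m n := by
  rw [Qmat, Qmat, show n + 1 - m = n - m + 1 by omega, List.range'_concat,
    show m + 1 * (n - m) = n by omega]
  simp

lemma Qmat_succ_apply {m n : ℕ} (h : m ≤ n) (c d : α) :
    Qmat win lose m (n + 1) c d = Qmat win lose m n c d +
      if c = lose n then Qmat win lose m n (win n) d else 0 := by
  rw [Qmat_succ win lose h, Bmat, Matrix.add_mul, Matrix.one_mul, Matrix.add_apply]
  by_cases hc : c = lose n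
  · subst hc; simp
  · rw [if_neg hc, Matrix.single_mul_apply_of_ne _ _ _ _ _ hc]

def colSupport (M t : ℕ) (b : α) : Finset α :=
  {c | 0 < Qmat win lose M t c b}

variable {win lose} {M s t u : ℕ} {b : α}

lemma mem_colSupport {c : α} : c ∈ colSupport win lose M t b ↔ 0 < Qmat win lose M t c b := by
  simp [colSupport]

lemma colSupport_self : colSupport win lose M M b = {b} := by
  ext c
  by_cases hc : c = b <;> simp [mem_colSupport, Qmat_self, hc]

lemma colSupport_succ (h : M ≤ t) :
    colSupport win lose M (t + 1) b =
      if win t ∈ colSupport win lose M t b then insert (lose t) (colSupport win lose M t b)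
      else colSupport win lose M t b := by
  ext c
  by_cases hc : c = lose t
  · subst hc
    split_ifs with hw <;> simp_all [mem_colSupport, Qmat_succ_apply win lose h]
  · split_ifs <;> simp [mem_colSupport, Qmat_succ_apply win lose h, hc]

lemma colSupport_mono (hs : M ≤ s) (hsu : s ≤ u) :
    colSupport win lose M s b ⊆ colSupport win lose M u b := by
  induction u, hsu using Nat.le_induction with
  | base => rfl
  | succ u hu ih =>
    rw [colSupport_succ (hs.trans hu)]
    split_ifs
    exacts [ih.trans (Finset.subset_insert _ _), ih]

lemma lose_mem_colSupport_succ (h : M ≤ t) (hw : win t ∈ colSupport win lose M t b) :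
    lose t ∈ colSupport win lose M (t + 1) b := by
  rw [colSupport_succ h, if_pos hw]
  exact Finset.mem_insert_self _ _

lemma mem_colSupport_self (h : M ≤ t) : b ∈ colSupport win lose M t b :=
  colSupport_mono le_rfl h (by rw [colSupport_self]; exact Finset.mem_singleton_self b)

lemma colSupport_ssubset_of_win_eq (hwin_ne : ∀ n, win n ≠ lose n) (hu : M ≤ u)
    (hb : win u = b) :
    colSupport win lose M M b ⊂ colSupport win lose M (u + 1) b := by
  subst hb
  refine (colSupport_mono le_rfl (hu.trans (Nat.le_add_right u 1))).ssubset_of_ne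
    fun heq => hwin_ne u ?_
  have hl : lose u ∈ colSupport win lose M (u + 1) (win u) :=
    lose_mem_colSupport_succ hu (mem_colSupport_self hu)
  rw [← heq, colSupport_self, Finset.mem_singleton] at hl
  exact hl.symm

lemma colSupport_succ_ssubset_of_win_not_mem
    (hwin_next : ∀ n, win n = win (n + 1) ∨ win n = lose (n + 1))
    (hMt : M ≤ t) (htu : t ≤ u) (ht : win t ∉ colSupport win lose M t b)
    (hu : win u ∈ colSupport win lose M u b) :
    colSupport win lose M (t + 1) b ⊂ colSupport win lose M (u + 1) b := by
  have hmono {v w : ℕ} (hv : t ≤ v) (hvw : v ≤ w) :=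
    colSupport_mono (win := win) (lose := lose) (b := b) (hMt.trans hv) hvw
  have hstuck : ∀ v, t ≤ v → colSupport win lose M (v + 1) b ⊆ colSupport win lose M t b →
      win v ∉ colSupport win lose M v b := by
    intro v hv
    induction v, hv using Nat.le_induction with
    | base => exact fun _ => ht
    | succ v hv ih =>
      intro hsub hw
      have hw' := hsub (hmono (by omega) v.succ.le_succ hw)
      have hl := hsub (lose_mem_colSupport_succ (hMt.trans (by omega)) hw)
      refine ih ((hmono (by omega) v.succ.le_succ).trans hsub) (hmono le_rfl hv ?_)
      rcases hwin_next v with h | h <;> rw [h]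
      exacts [hw', hl]
  refine (hmono t.le_succ (by omega)).ssubset_of_ne fun heq => hstuck u htu ?_ hu
  rw [← heq, colSupport_succ hMt, if_neg ht]

end ColumnSupport

section MMY

variable {α : Type} [Fintype α] [DecidableEq α] {win lose : ℕ → α} {mk : ℕ → ℕ}

lemma MMYTimes.exists_win_eq (h : MMYTimes win mk) (j : ℕ) (c : α) :
    ∃ i ∈ Finset.Icc (mk j) (mk (j + 1)), win i = c :=
  Finset.mem_image.1 ((h.2.2 j).2 ▸ Finset.mem_univ c)

lemma MMYTimes.exists_win_eq_of_ne (h : MMYTimes win mk) (j : ℕ) {c : α}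
    (hc : c ≠ win (mk (j + 1))) : ∃ i ∈ Finset.Ico (mk j) (mk (j + 1)), win i = c := by
  obtain ⟨i, hi, rfl⟩ := h.exists_win_eq j c
  rw [Finset.mem_Icc] at hi
  exact ⟨i, Finset.mem_Ico.2 ⟨hi.1, hi.2.lt_of_ne fun h => hc (h ▸ rfl)⟩, rfl⟩

lemma colSupport_ssubset_of_MMYTimes
    (hwin_next : ∀ n, win n = win (n + 1) ∨ win n = lose (n + 1))
    (hMMY : MMYTimes win mk) {M j u : ℕ} {a b : α} (hM : M ≤ mk j)
    (ha : a ∉ colSupport win lose M (mk (j + 1)) b) (hu : mk (j + 1) ≤ u)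
    (hwu : win u ∈ colSupport win lose M u b) :
    colSupport win lose M (mk j + 1) b ⊂ colSupport win lose M (u + 1) b := by
  obtain ⟨t, ht, rfl⟩ := hMMY.exists_win_eq j a
  rw [Finset.mem_Icc] at ht
  have hMt := hM.trans ht.1
  refine (colSupport_mono (by omega) (by omega)).trans_ssubset
    (colSupport_succ_ssubset_of_win_not_mem hwin_next hMt (ht.2.trans hu) (fun h => ha ?_) hwu)
  exact colSupport_mono hMt ht.2 h

lemma add_two_le_card_colSupport (hwin_ne : ∀ n, win n ≠ lose n)
    (hwin_next : ∀ n, win n = win (n + 1) ∨ win n = lose (n + 1)) (hMMY : MMYTimes win mk)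
    {k : ℕ} {a b : α} (i : ℕ) (ha : a ∉ colSupport win lose (mk k) (mk (k + 2 * i)) b) :
    i + 2 ≤ (colSupport win lose (mk k) (mk (k + 2 * i + 1) + 1) b).card := by
  have hmono := hMMY.2.1.monotone
  let P (t : ℕ) := colSupport win lose (mk k) t b
  induction i with
  | zero =>
    simp only [mul_zero, add_zero]
    obtain ⟨u, hu, hwu⟩ := hMMY.exists_win_eq k b
    rw [Finset.mem_Icc] at hu
    have hlt : P (mk k) ⊂ P (u + 1) := colSupport_ssubset_of_win_eq hwin_ne hu.1 hwu
    have hle : P (u + 1) ⊆ P (mk (k + 1) + 1) := colSupport_mono (by omega) (by omega)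
    have hcard := (Finset.card_lt_card hlt).trans_le (Finset.card_le_card hle)
    simp only [P, colSupport_self, Finset.card_singleton] at hcard
    omega
  | succ i ih =>
    have ih := ih fun h => ha (colSupport_mono (hmono (by omega)) (hmono (by omega)) h)
    obtain ⟨u, hu, hwu⟩ := hMMY.exists_win_eq (k + 2 * (i + 1)) b
    rw [Finset.mem_Icc] at hu
    have hku : mk k ≤ u := (hmono (by omega)).trans hu.1
    have hlt : P (mk (k + 2 * i + 1) + 1) ⊂ P (u + 1) :=
      colSupport_ssubset_of_MMYTimes hwin_next hMMY (hmono (by omega)) ha hu.1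
        (hwu ▸ mem_colSupport_self hku)
    have hle : P (u + 1) ⊆ P (mk (k + 2 * (i + 1) + 1) + 1) :=
      colSupport_mono (by omega) (by omega)
    have := (Finset.card_lt_card hlt).trans_le (Finset.card_le_card hle)
    simp only [P] at ih this
    omega

lemma card_colSupport_lt_of_MMYTimes
    (hwin_next : ∀ n, win n = win (n + 1) ∨ win n = lose (n + 1))
    (hMMY : MMYTimes win mk) {M j : ℕ} {a b : α} (hM : M ≤ mk j)
    (ha : a ∉ colSupport win lose M (mk (j + 1)) b)
    (hcard : 1 < (colSupport win lose M (mk j + 1) b).card) :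
    (colSupport win lose M (mk j + 1) b).card < (colSupport win lose M (mk (j + 2)) b).card := by
  -- a supported letter other than `win (mk (j + 2))` wins strictly before `mk (j + 2)`
  obtain ⟨c, hc, hcw⟩ := Finset.exists_mem_ne hcard (win (mk (j + 1 + 1)))
  obtain ⟨u, hu, rfl⟩ := hMMY.exists_win_eq_of_ne (j + 1) hcw
  rw [Finset.mem_Ico] at hu
  have hju : mk j < u := (hMMY.2.1 (Nat.lt_add_one j)).trans_le hu.1
  refine (Finset.card_lt_card ?_).trans_le
    (Finset.card_le_card (colSupport_mono (by omega) hu.2))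
  exact colSupport_ssubset_of_MMYTimes hwin_next hMMY hM ha hu.1 (colSupport_mono (by omega) hju hc)

lemma colSupport_eq_univ (hwin_ne : ∀ n, win n ≠ lose n)
    (hwin_next : ∀ n, win n = win (n + 1) ∨ win n = lose (n + 1)) (hMMY : MMYTimes win mk)
    {k r : ℕ} (hr : max (2 * Fintype.card α - 3) 2 ≤ r) (b : α) :
    colSupport win lose (mk k) (mk (k + r)) b = Finset.univ := by
  have hmk := hMMY.2.1
  have hmono := hmk.monotone
  by_contra hne
  obtain ⟨a, ha⟩ := not_forall.1 (mt Finset.eq_univ_of_forall hne)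
  suffices Fintype.card α ≤ (colSupport win lose (mk k) (mk (k + r)) b).card from
    hne ((Finset.card_eq_iff_eq_univ _).1 (this.antisymm' (Finset.card_le_univ _)))
  have haj {i : ℕ} (hki : k ≤ i) (hi : i ≤ k + r) :
      a ∉ colSupport win lose (mk k) (mk i) b :=
    fun h => ha (colSupport_mono (hmono hki) (hmono hi) h)
  obtain ⟨j, hj⟩ : ∃ j, k + r = j + 2 := ⟨k + r - 2, by omega⟩
  rw [hj] at haj ⊢
  rcases le_or_gt (Fintype.card α) 2 with hd | hd
  · have h2 := add_two_le_card_colSupport hwin_ne hwin_next hMMY 0 (haj le_rfl (by omega))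
    have hle := Finset.card_le_card (colSupport_mono (win := win) (lose := lose) (b := b)
      ((hmono (show k ≤ k + 2 * 0 + 1 by omega)).trans (Nat.le_add_right _ 1))
      (hmk (show k + 2 * 0 + 1 < j + 2 by omega)))
    omega
  · have hd3 := add_two_le_card_colSupport hwin_ne hwin_next hMMY (Fintype.card α - 3)
      (haj (by omega) (by omega))
    have hle := Finset.card_le_card (colSupport_mono (win := win) (lose := lose) (b := b)
      ((hmono (show k ≤ k + 2 * (Fintype.card α - 3) + 1 by omega)).trans
        (Nat.le_add_right _ 1))
      (Nat.add_le_add_right (hmono (show k + 2 * (Fintype.card α - 3) + 1 ≤ j by omega)) 1))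
    have hlt := card_colSupport_lt_of_MMYTimes (j := j) hwin_next hMMY (hmono (by omega))
      (haj (by omega) (by omega)) (by omega)
    omega

end MMY

theorem mmy_cocycle_positive_general
    (Ds : ℕ → IETData A) (win lose : ℕ → A)
    (hRV : ∀ n : ℕ, RVStep (Ds n) (Ds (n + 1)) (win n) (lose n))
    (mk : ℕ → ℕ) (hMMY : MMYTimes win mk)
    (r : ℕ) (hr : max (2 * Fintype.card A - 3) 2 ≤ r) (k : ℕ) :
    ∀ a b : A, 0 < Qmat win lose (mk k) (mk (k + r)) a b := by
  intro a b
  have hwin_ne (n : ℕ) : win n ≠ lose n := (hRV n).win_ne_lose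
  have hwin_next (n : ℕ) : win n = win (n + 1) ∨ win n = lose (n + 1) :=
    (hRV n).win_eq_win_or_lose (hRV (n + 1))
  exact mem_colSupport.1 (colSupport_eq_univ hwin_ne hwin_next hMMY hr b ▸ Finset.mem_univ a)

/-- Marmi–Moussa–Yoccoz, Lemma 1.2.4: for an interval exchange map on
d ≥ 2 intervals with an infinite Rauzy–Veech expansion and MMY acceleration times
(m_k), if r ≥ max(2d − 3, 2) then all entries of the cocycle matrix
A(k, k+r) = Q(m_k, m_{k+r}) are strictly positive. -/
theorem mmy_cocycle_positive
    (hd : 2 ≤ Fintype.card A)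
    (Ds : ℕ → IETData A) (win lose : ℕ → A)
    (hRV : ∀ n : ℕ, RVStep (Ds n) (Ds (n + 1)) (win n) (lose n))
    (mk : ℕ → ℕ) (hMMY : MMYTimes win mk)
    (r : ℕ) (hr : max (2 * Fintype.card A - 3) 2 ≤ r) (k : ℕ) :
    ∀ a b : A, 0 < Qmat win lose (mk k) (mk (k + r)) a b :=
  mmy_cocycle_positive_general Ds win lose hRV mk hMMY r hr k
end

section
/- Let T be a 3-interval exchange map on [0,λ*) with permutation (A B C → C B A) and lengths (λ_A, λ_B, λ_C), and let T̄ be the rotation by angle (λ_B + λ_C)/(λ* + λ_B) on the circle of circumference λ* + λ_B, so that T is the first return map of T̄ to [0,λ*). Then for every x ∈ [0,λ*), lim_{r→0+} log τ_r(x)/(−log r) = 1 (return times for T) if and only if lim_{r→0+} log τ̄_r(x)/(−log r) = 1 (return times for T̄). -/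
/-- First return time of x into its r-neighborhood: τ_r(x) = min {j ≥ 1 : |T^j x − x| < r}. -/
noncomputable def tau (T : ℝ → ℝ) (r x : ℝ) : ℕ :=
  sInf {j : ℕ | 1 ≤ j ∧ |T^[j] x - x| < r}

/-- let T be the 3-interval exchange map on [0,λ*) (λ* = λ_A+λ_B+λ_C) with
permutation (A B C → C B A) and lengths (λ_A, λ_B, λ_C), and let T̄ be the rotation by
angle (λ_B+λ_C)/(λ*+λ_B) on the circle [0, λ*+λ_B) of circumference λ*+λ_B, so that T is
the first return map of T̄ to [0,λ*).  Then for every x ∈ [0,λ*),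
lim_{r→0+} log τ_r(x)/(−log r) = 1 for T iff lim_{r→0+} log τ̄_r(x)/(−log r) = 1 for T̄. -/
theorem threeIET_return_iff_rotation_return
    (lamA lamB lamC : ℝ) (hA : 0 < lamA) (hB : 0 < lamB) (hC : 0 < lamC)
    (T Tbar : ℝ → ℝ)
    (hT1 : ∀ x ∈ Set.Ico (0 : ℝ) lamA, T x = x + lamB + lamC)
    (hT2 : ∀ x ∈ Set.Ico lamA (lamA + lamB), T x = x + lamC - lamA)
    (hT3 : ∀ x ∈ Set.Ico (lamA + lamB) (lamA + lamB + lamC), T x = x - lamA - lamB)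
    (hTbar : ∀ x ∈ Set.Ico (0 : ℝ) (lamA + 2 * lamB + lamC), Tbar x =
      if x + lamB + lamC < lamA + 2 * lamB + lamC then x + lamB + lamC
      else x + lamB + lamC - (lamA + 2 * lamB + lamC))
    (hirr : Irrational ((lamB + lamC) / (lamA + 2 * lamB + lamC)))
    (x : ℝ) (hx : x ∈ Set.Ico 0 (lamA + lamB + lamC)) :
    Filter.Tendsto (fun r => Real.log (tau T r x) / (-Real.log r))
        (nhdsWithin 0 (Set.Ioi 0)) (nhds 1) ↔
      Filter.Tendsto (fun r => Real.log (tau Tbar r x) / (-Real.log r))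
        (nhdsWithin 0 (Set.Ioi 0)) (nhds 1) := by
  set S : ℝ := lamA + lamB + lamC with hS
  set L : ℝ := lamA + 2 * lamB + lamC with hL
  have hSL : S < L := by simp [hS, hL]; linarith
  -- the rotation step on [S, L) lands in [0, S)
  have hcomp : ∀ y ∈ Set.Ico S L, Tbar y ∈ Set.Ico (0:ℝ) S := by
    intro y hy
    have hy' : y ∈ Set.Ico (0:ℝ) L := ⟨by linarith [hy.1, hA.le, hB.le, hC.le, hy.1], hy.2⟩
    have h0y : (0:ℝ) ≤ y := by
      have : (0:ℝ) < S := by simp [hS]; linarith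
      linarith [hy.1]
    rw [hTbar y ⟨h0y, hy.2⟩]
    have : ¬ (y + lamB + lamC < L) := by simp [hL]; linarith [hy.1, hS]
    rw [if_neg this]
    constructor
    · have := hy.1; simp [hS] at this ⊢; linarith
    · have := hy.2; simp [hL] at this; linarith
  -- the step lemma: on [0,S), either Tbar = T (return in one step),
  -- or Tbar lands in [S,L) and Tbar ∘ Tbar = T (return in two steps)
  have hstep : ∀ y ∈ Set.Ico (0:ℝ) S,
      (Tbar y = T y ∧ T y ∈ Set.Ico (0:ℝ) S) ∨
      (Tbar y ∈ Set.Ico S L ∧ Tbar (Tbar y) = T y ∧ T y ∈ Set.Ico (0:ℝ) S) := by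
    intro y hy
    have hyL : y ∈ Set.Ico (0:ℝ) L := ⟨hy.1, lt_trans hy.2 hSL⟩
    rcases lt_or_ge y lamA with h1 | h1
    · left
      have hT : T y = y + lamB + lamC := hT1 y ⟨hy.1, h1⟩
      have hlt : y + lamB + lamC < L := by simp [hL]; linarith
      rw [hTbar y hyL, if_pos hlt, hT]
      exact ⟨rfl, ⟨by linarith [hy.1], by simp [hS]; linarith⟩⟩
    rcases lt_or_ge y (lamA + lamB) with h2 | h2
    · right
      have hT : T y = y + lamC - lamA := hT2 y ⟨h1, h2⟩
      have hlt : y + lamB + lamC < L := by simp [hL]; linarith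
      have hTb : Tbar y = y + lamB + lamC := by rw [hTbar y hyL, if_pos hlt]
      have hmem : Tbar y ∈ Set.Ico S L := by
        rw [hTb]; exact ⟨by simp [hS]; linarith, by simp [hL]; linarith⟩
      refine ⟨hmem, ?_, ?_⟩
      · have hmem' : Tbar y ∈ Set.Ico (0:ℝ) L := ⟨by linarith [hmem.1, hy.1, hB.le, hC.le], hmem.2⟩
        have hnlt : ¬ (Tbar y + lamB + lamC < L) := by rw [hTb]; simp [hL]; linarith
        rw [hTbar _ hmem', if_neg hnlt, hTb, hT]; simp [hL]; ring
      · rw [hT]; exact ⟨by linarith, by simp [hS]; linarith⟩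
    · left
      have hT : T y = y - lamA - lamB := hT3 y ⟨h2, hy.2⟩
      have hnlt : ¬ (y + lamB + lamC < L) := by simp [hL]; linarith
      rw [hTbar y hyL, if_neg hnlt, hT]
      constructor
      · simp [hL]; ring
      · have := hy.2; simp [hS] at this
        exact ⟨by linarith, by simp [hS]; linarith⟩
  have hxS : x ∈ Set.Ico (0:ℝ) S := hx
  -- Lemma A: every T-iterate is a Tbar-iterate with comparable index
  have lemA : ∀ j : ℕ, ∃ m : ℕ, j ≤ m ∧ m ≤ 2 * j ∧ T^[j] x = Tbar^[m] x ∧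
      T^[j] x ∈ Set.Ico (0:ℝ) S := by
    intro j
    induction j with
    | zero => exact ⟨0, le_refl _, by norm_num, rfl, hxS⟩
    | succ j ih =>
      obtain ⟨m, hjm, hm2, heq, hmem⟩ := ih
      rcases hstep _ hmem with ⟨h1, h2⟩ | ⟨_, h1, h2⟩
      · refine ⟨m + 1, by omega, by omega, ?_, ?_⟩
        · rw [Function.iterate_succ_apply', Function.iterate_succ_apply', ← heq, h1]
        · rw [Function.iterate_succ_apply']; exact h2
      · refine ⟨m + 2, by omega, by omega, ?_, ?_⟩
        · rw [Function.iterate_succ_apply']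
          have : Tbar^[m+2] x = Tbar (Tbar (Tbar^[m] x)) := by
            rw [Function.iterate_succ_apply', Function.iterate_succ_apply']
          rw [this, ← heq, h1]
        · rw [Function.iterate_succ_apply']; exact h2
  -- the Tbar orbit stays in [0, L)
  have horb : ∀ m : ℕ, Tbar^[m] x ∈ Set.Ico (0:ℝ) L := by
    intro m
    induction m with
    | zero => exact ⟨hxS.1, lt_trans hxS.2 hSL⟩
    | succ m ih =>
      rw [Function.iterate_succ_apply']
      set y := Tbar^[m] x
      rw [hTbar y ih]
      split
      · exact ⟨by linarith [ih.1, hB.le, hC.le], by assumption⟩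
      · rename_i h
        push_neg at h
        constructor
        · linarith
        · have := ih.2; linarith [hB, hC]
  -- Lemma B: every Tbar-iterate in [0,S) is a T-iterate with comparable index
  have lemB : ∀ m : ℕ, Tbar^[m] x ∈ Set.Ico (0:ℝ) S →
      ∃ j : ℕ, j ≤ m ∧ m ≤ 2 * j ∧ T^[j] x = Tbar^[m] x := by
    intro m
    induction m using Nat.strong_induction_on with
    | _ m ih =>
      intro hmem
      match m with
      | 0 => exact ⟨0, le_refl _, by norm_num, rfl⟩
      | (k+1) =>
        by_cases hk : Tbar^[k] x ∈ Set.Ico (0:ℝ) S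
        · obtain ⟨j, hjk, hk2, heq⟩ := ih k (by omega) hk
          rcases hstep _ hk with ⟨h1, _⟩ | ⟨h1, _, _⟩
          · refine ⟨j + 1, by omega, by omega, ?_⟩
            rw [Function.iterate_succ_apply', Function.iterate_succ_apply', heq, ← h1]
          · exfalso
            rw [Function.iterate_succ_apply'] at hmem
            exact absurd hmem.2 (not_lt.mpr h1.1)
        · -- Tbar^[k] x ∈ [S, L); then k ≥ 1 and Tbar^[k-1] x ∈ [0,S) in the two-step case
          have hkSL : Tbar^[k] x ∈ Set.Ico S L := by
            rcases horb k with ⟨h0, hL'⟩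
            exact ⟨le_of_not_gt (fun h => hk ⟨h0, h⟩), hL'⟩
          match k with
          | 0 => exact absurd hxS hk
          | (k'+1) =>
            have hk' : Tbar^[k'] x ∈ Set.Ico (0:ℝ) S := by
              by_contra h
              have : Tbar^[k'] x ∈ Set.Ico S L := by
                rcases horb k' with ⟨h0, hL'⟩
                exact ⟨le_of_not_gt (fun hh => h ⟨h0, hh⟩), hL'⟩
              have h2 : Tbar^[k'+1] x ∈ Set.Ico (0:ℝ) S := by
                rw [Function.iterate_succ_apply']; exact hcomp _ this
              exact hk h2
            obtain ⟨j, hjk, hk2, heq⟩ := ih k' (by omega) hk'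
            rcases hstep _ hk' with ⟨h1, h2⟩ | ⟨_, h1, _⟩
            · exfalso
              rw [Function.iterate_succ_apply', h1] at hkSL
              exact absurd hkSL.1 (not_le.mpr h2.2)
            · refine ⟨j + 1, by omega, by omega, ?_⟩
              have h2 : Tbar^[k'+1+1] x = Tbar (Tbar (Tbar^[k'] x)) := by
                rw [Function.iterate_succ_apply', Function.iterate_succ_apply']
              rw [h2, Function.iterate_succ_apply', heq, ← h1]
  -- comparison of return times for small r
  have hxlt : x < S := hxS.2
  have hr0pos : (0:ℝ) < min (S - x) 1 := lt_min (by linarith) one_pos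
  have hcompare : ∀ r : ℝ, 0 < r → r < S - x →
      (tau T r x = 0 ∧ tau Tbar r x = 0) ∨
      (1 ≤ tau T r x ∧ tau T r x ≤ tau Tbar r x ∧ tau Tbar r x ≤ 2 * tau T r x) := by
    intro r hr hrS
    set ST := {j : ℕ | 1 ≤ j ∧ |T^[j] x - x| < r} with hST
    set SB := {j : ℕ | 1 ≤ j ∧ |Tbar^[j] x - x| < r} with hSB
    -- claim 2: every element of SB dominates an element of ST
    have claim2 : ∀ m ∈ SB, ∃ j ∈ ST, j ≤ m := by
      intro m hm
      have hmemS : Tbar^[m] x ∈ Set.Ico (0:ℝ) S := by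
        refine ⟨(horb m).1, ?_⟩
        have := abs_lt.mp hm.2
        linarith [this.2]
      obtain ⟨j, hjm, hm2, heq⟩ := lemB m hmemS
      have hm1 : 1 ≤ m := hm.1
      refine ⟨j, ⟨by omega, by rw [heq]; exact hm.2⟩, hjm⟩
    by_cases hne : ST.Nonempty
    · right
      have htmem : tau T r x ∈ ST := Nat.sInf_mem hne
      obtain ⟨m, hjm, hm2, heq, _⟩ := lemA (tau T r x)
      have ht1 : 1 ≤ tau T r x := htmem.1
      have hmSB : m ∈ SB := ⟨by omega, by rw [← heq]; exact htmem.2⟩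
      have hne' : SB.Nonempty := ⟨m, hmSB⟩
      have htb : tau Tbar r x ∈ SB := Nat.sInf_mem hne'
      obtain ⟨j, hjST, hjle⟩ := claim2 _ htb
      refine ⟨htmem.1, ?_, ?_⟩
      · exact le_trans (Nat.sInf_le hjST) hjle
      · exact le_trans (Nat.sInf_le hmSB) hm2
    · left
      have hSBe : ¬ SB.Nonempty := by
        rintro ⟨m, hm⟩
        obtain ⟨j, hj, _⟩ := claim2 m hm
        exact hne ⟨j, hj⟩
      rw [Set.not_nonempty_iff_eq_empty] at hne hSBe
      constructor
      · simp only [tau, ← hST, hne, Nat.sInf_empty]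
      · simp only [tau, ← hSB, hSBe, Nat.sInf_empty]
  -- bound on the difference of the two normalized log return times
  set f := fun r => Real.log (tau T r x) / (-Real.log r) with hf
  set g := fun r => Real.log (tau Tbar r x) / (-Real.log r) with hg
  have hbound : ∀ᶠ r in nhdsWithin 0 (Set.Ioi 0),
      ‖g r - f r‖ ≤ Real.log 2 / (-Real.log r) := by
    have hmem : Set.Ioo (0:ℝ) (min (S - x) 1) ∈ nhdsWithin 0 (Set.Ioi 0) :=
      Ioo_mem_nhdsGT_of_mem ⟨le_refl 0, hr0pos⟩
    filter_upwards [hmem] with r hr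
    have hr1 : r < 1 := lt_of_lt_of_le hr.2 (min_le_right _ _)
    have hrS : r < S - x := lt_of_lt_of_le hr.2 (min_le_left _ _)
    have hlogneg : Real.log r < 0 := Real.log_neg hr.1 hr1
    have hnegpos : 0 < -Real.log r := by linarith
    rcases hcompare r hr.1 hrS with ⟨h1, h2⟩ | ⟨h1, h2, h3⟩
    · simp [hf, hg, h1, h2]
      exact div_nonneg (Real.log_nonneg one_le_two) hnegpos.le
    · have ht1 : (1:ℝ) ≤ (tau T r x : ℝ) := by exact_mod_cast h1
      have ht2 : (tau T r x : ℝ) ≤ (tau Tbar r x : ℝ) := by exact_mod_cast h2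
      have ht3 : (tau Tbar r x : ℝ) ≤ 2 * (tau T r x : ℝ) := by exact_mod_cast h3
      have hpos : (0:ℝ) < (tau T r x : ℝ) := by linarith
      have hlog1 : Real.log (tau T r x) ≤ Real.log (tau Tbar r x) :=
        Real.log_le_log hpos ht2
      have hlog2 : Real.log (tau Tbar r x) ≤ Real.log 2 + Real.log (tau T r x) := by
        have := Real.log_le_log (by linarith) ht3
        rwa [Real.log_mul (by norm_num) (ne_of_gt hpos)] at this
      have : g r - f r = (Real.log (tau Tbar r x) - Real.log (tau T r x)) / (-Real.log r) := by
        simp [hf, hg, div_sub_div_same]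
      rw [this, Real.norm_eq_abs,
        abs_of_nonneg (div_nonneg (by linarith) hnegpos.le)]
      exact div_le_div_of_nonneg_right (by linarith) hnegpos.le
  -- the bound tends to 0
  have htend0 : Filter.Tendsto (fun r => Real.log 2 / (-Real.log r))
      (nhdsWithin 0 (Set.Ioi 0)) (nhds 0) := by
    have h1 : Filter.Tendsto (fun r : ℝ => -Real.log r) (nhdsWithin 0 (Set.Ioi 0))
        Filter.atTop := by
      have := Real.tendsto_log_nhdsGT_zero
      exact Filter.tendsto_neg_atBot_atTop.comp this
    exact Filter.Tendsto.div_atTop tendsto_const_nhds h1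
  have hdiff : Filter.Tendsto (fun r => g r - f r) (nhdsWithin 0 (Set.Ioi 0)) (nhds 0) :=
    squeeze_zero_norm' hbound htend0
  constructor
  · intro h
    have := h.add hdiff
    simpa using this
  · intro h
    have := h.sub hdiff
    simpa using this
end
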